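/- arXiv:2305.10117 — 3 statements merged into one kernel-verified Lean document; each statement's English description precedes it below -/
import Mathlib

section
/- Let g : ℂ → ℂ be analytic and bounded on the open unit disc, with Taylor expansion g(x) = Σ_{n ≥ 0} cₙ·xⁿ at 0. Then the power series h(z) := Σ_{n ≥ 0} c_{2n}·zⁿ converges and defines an analytic function on the open unit disc, h(x²) = (g(x) + g(−x))/2 for every complex x with |x| < 1, and sup_{|z|<1} |h(z)| ≤ sup_{|z|<1} |g(z)|. -/
/-!
Averaging the Taylor series of `g` at `x` and `-x` cancels the odd terms, so `∑ c₂ₙ zⁿ` converges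
at `z = x²` to `(g x + g (-x)) / 2`. Every point of the disc is such a square with `‖x‖ < 1`, so the
series converges on the whole disc; hence its radius of convergence is at least `1`, its sum is
analytic there, and as an average of two values of `g` it is bounded by `C`.
-/

/-- The open unit disc in `ℂ`. -/
def openUnitDisc : Set ℂ := {z : ℂ | ‖z‖ < 1}

/-- `f` is a solution of the Collatz functional equation for `(k, wb, wf)`:
it is analytic and bounded on the open unit disc and satisfies the functional equation
`2 f(x²) = wb (f(x) + f(−x)) + wf x² (f(x⁶) − f(−x⁶)) + 2 x^(2k)` there. -/
def IsSolution (k : ℕ) (wb wf : ℝ) (f : ℂ → ℂ) : Prop :=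
  AnalyticOnNhd ℂ f openUnitDisc ∧
  (∃ C : ℝ, ∀ z ∈ openUnitDisc, ‖f z‖ ≤ C) ∧
  ∀ x : ℂ, ‖x‖ < 1 →
    2 * f (x ^ 2) =
      (wb : ℂ) * (f x + f (-x)) + (wf : ℂ) * x ^ 2 * (f (x ^ 6) - f (-x ^ 6)) +
        2 * x ^ (2 * k)

/-- `a` is the sequence of Taylor coefficients of `f` at `0`:
`f x = Σ aₙ xⁿ` on the open unit disc. -/
def HasCoeffs (f : ℂ → ℂ) (a : ℕ → ℂ) : Prop :=
  ∀ x : ℂ, ‖x‖ < 1 → HasSum (fun n => a n * x ^ n) (f x)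

open FormalMultilinearSeries

theorem hasSum_even_part {𝕜 : Type*} [Field 𝕜] [NeZero (2 : 𝕜)] [TopologicalSpace 𝕜]
    [IsTopologicalRing 𝕜] {a : ℕ → 𝕜} {x s t : 𝕜}
    (hs : HasSum (fun n => a n * x ^ n) s) (ht : HasSum (fun n => a n * (-x) ^ n) t) :
    HasSum (fun n => a (2 * n) * (x ^ 2) ^ n) ((s + t) / 2) := by
  have hodd : ∀ n ∉ Set.range (2 * ·), (a n * x ^ n + a n * (-x) ^ n) / 2 = 0 := by
    intro n hn
    have : Odd n := Nat.not_even_iff_odd.mp fun ⟨m, hm⟩ => hn ⟨m, by simp only; omega⟩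
    rw [this.neg_pow]
    ring
  convert ((mul_right_injective₀ two_ne_zero).hasSum_iff hodd).mpr ((hs.add ht).div_const 2)
    using 2 with n
  simp only [Function.comp_apply, (even_two_mul n).neg_pow, ← pow_mul]
  field_simp
  ring

section RCLike

variable {𝕜 : Type*} [RCLike 𝕜] {a : ℕ → 𝕜}

theorem one_le_radius_ofScalars (h : ∀ z : 𝕜, ‖z‖ < 1 → Summable fun n => a n * z ^ n) :
    1 ≤ (ofScalars 𝕜 a).radius := by
  refine ENNReal.le_of_forall_nnreal_lt fun r hr => (ofScalars 𝕜 a).le_radius_of_tendsto (l := 0) ?_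
  have hr : ‖((r : ℝ) : 𝕜)‖ < 1 := by simpa using hr
  simpa [ofScalars_norm] using (h _ hr).tendsto_atTop_zero.norm

theorem hasSum_ofScalarsSum {z : 𝕜} (hz : ‖z‖ₑ < (ofScalars 𝕜 a).radius) :
    HasSum (fun n => a n * z ^ n) (ofScalarsSum (E := 𝕜) a z) := by
  unfold ofScalarsSum
  simpa only [ofScalars_apply_eq, smul_eq_mul] using
    (ofScalars 𝕜 a).hasSum (x := z) (by simpa using hz)

theorem analyticOnNhd_ofScalarsSum (ha : 0 < (ofScalars 𝕜 a).radius) :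
    AnalyticOnNhd 𝕜 (ofScalarsSum (E := 𝕜) a) (Metric.eball 0 (ofScalars 𝕜 a).radius) :=
  ((ofScalars 𝕜 a).hasFPowerSeriesOnBall ha).analyticOnNhd

theorem norm_add_div_two_le {u v : 𝕜} {C : ℝ} (hu : ‖u‖ ≤ C) (hv : ‖v‖ ≤ C) :
    ‖(u + v) / 2‖ ≤ C := by
  rw [norm_div, RCLike.norm_ofNat, div_le_iff₀ two_pos]
  linarith [norm_add_le u v]

end RCLike

theorem exists_sq_eq_of_norm_lt_one {K : Type*} [NormedField K] [IsAlgClosed K] {z : K}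
    (hz : ‖z‖ < 1) : ∃ x : K, x ^ 2 = z ∧ ‖x‖ < 1 := by
  obtain ⟨x, hx⟩ := IsAlgClosed.exists_pow_nat_eq z two_pos
  refine ⟨x, hx, ?_⟩
  rw [← hx, norm_pow] at hz
  exact (sq_lt_one_iff₀ (norm_nonneg x)).mp hz

theorem stmt_3_general (g : ℂ → ℂ) (c : ℕ → ℂ) (C : ℝ)
    (hb : ∀ z ∈ openUnitDisc, ‖g z‖ ≤ C)
    (hc : HasCoeffs g c) :
    ∃ h : ℂ → ℂ,
      AnalyticOnNhd ℂ h openUnitDisc ∧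
      (∀ z : ℂ, ‖z‖ < 1 → HasSum (fun n => c (2 * n) * z ^ n) (h z)) ∧
      (∀ x : ℂ, ‖x‖ < 1 → h (x ^ 2) = (g x + g (-x)) / 2) ∧
      (∀ z ∈ openUnitDisc, ‖h z‖ ≤ C) := by
  set a : ℕ → ℂ := fun n => c (2 * n)
  have hmem {x : ℂ} (hx : ‖x‖ < 1) : -x ∈ openUnitDisc := by simpa [openUnitDisc] using hx
  have heven {x : ℂ} (hx : ‖x‖ < 1) :
      HasSum (fun n => a n * (x ^ 2) ^ n) ((g x + g (-x)) / 2) :=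
    hasSum_even_part (hc x hx) (hc (-x) (hmem hx))
  have hrad : 1 ≤ (ofScalars ℂ a).radius := one_le_radius_ofScalars fun z hz => by
    obtain ⟨x, rfl, hx⟩ := exists_sq_eq_of_norm_lt_one hz
    exact (heven hx).summable
  have hdisc {z : ℂ} (hz : ‖z‖ < 1) : ‖z‖ₑ < (ofScalars ℂ a).radius :=
    (ofReal_norm z ▸ ENNReal.ofReal_lt_one.mpr hz).trans_le hrad
  have hsum {z : ℂ} (hz : ‖z‖ < 1) : HasSum (fun n => a n * z ^ n) (ofScalarsSum a z) :=
    hasSum_ofScalarsSum (hdisc hz)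
  have hsq {x : ℂ} (hx : ‖x‖ < 1) : ofScalarsSum a (x ^ 2) = (g x + g (-x)) / 2 :=
    (hsum (by simpa [norm_pow] using hx)).unique (heven hx)
  refine ⟨ofScalarsSum a, ?_, fun _ => hsum, fun _ => hsq, ?_⟩
  · exact (analyticOnNhd_ofScalarsSum (zero_lt_one.trans_le hrad)).mono
      fun z hz => by simpa using hdisc hz
  · intro z hz
    obtain ⟨x, rfl, hx⟩ := exists_sq_eq_of_norm_lt_one hz
    rw [hsq hx]
    exact norm_add_div_two_le (hb x hx) (hb (-x) (hmem hx))

theorem stmt_3 (g : ℂ → ℂ) (c : ℕ → ℂ) (C : ℝ)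
    (hg : AnalyticOnNhd ℂ g openUnitDisc)
    (hb : ∀ z ∈ openUnitDisc, ‖g z‖ ≤ C)
    (hc : HasCoeffs g c) :
    ∃ h : ℂ → ℂ,
      AnalyticOnNhd ℂ h openUnitDisc ∧
      (∀ z : ℂ, ‖z‖ < 1 → HasSum (fun n => c (2 * n) * z ^ n) (h z)) ∧
      (∀ x : ℂ, ‖x‖ < 1 → h (x ^ 2) = (g x + g (-x)) / 2) ∧
      (∀ z ∈ openUnitDisc, ‖h z‖ ≤ C) :=
  stmt_3_general g c C hb hc
end

section
/- If |w_b| + |w_f| < 1, then for every positive integer k there exists exactly one solution of the Collatz functional equation for (k, w_b, w_f). -/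
/-!
Substituting `y = x²`, the equation says that `f` is a fixed point of
`T f y = w_b E f y + (w_f / 2) y (f (y³) - f (-y³)) + yᵏ`, where `E f (x²) = (f x + f (-x)) / 2`;
`E f` is analytic, being `y ↦ Σ a₂ₙ yⁿ` for the Taylor coefficients `aₙ` of `f`.
For the sup-norm on the disc the two linear terms of `T` are Lipschitz with constants `|w_b|`
and `|w_f|`, so `T` is a contraction of the Banach space of bounded analytic functions on the
disc, and Banach's fixed point theorem gives existence and uniqueness.
-/

open Set Metric Filter BoundedContinuousFunction
open scoped Nat NNReal ENNReal

namespace BoundedAnalytic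

variable {E : Type*} [NormedAddCommGroup E] {U : Set ℂ}

noncomputable def extendZero (F : U →ᵇ E) : ℂ → E := Function.extend Subtype.val F 0

lemma extendZero_apply (F : U →ᵇ E) {z : ℂ} (hz : z ∈ U) : extendZero F z = F ⟨z, hz⟩ :=
  Subtype.val_injective.extend_apply F 0 ⟨z, hz⟩

lemma norm_extendZero_le (F : U →ᵇ E) {z : ℂ} (hz : z ∈ U) : ‖extendZero F z‖ ≤ ‖F‖ := by
  rw [extendZero_apply F hz]
  exact norm_coe_le_norm F _

variable [NormedSpace ℂ E]

def analyticBCF (U : Set ℂ) (E : Type*) [NormedAddCommGroup E] [NormedSpace ℂ E] :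
    Set (U →ᵇ E) := {F | AnalyticOnNhd ℂ (extendZero F) U}

lemma isClosed_analyticBCF [CompleteSpace E] (hU : IsOpen U) : IsClosed (analyticBCF U E) := by
  refine isSeqClosed_iff_isClosed.1 fun u F hu hF => ?_
  have hlim : TendstoUniformlyOn (fun n => extendZero (u n)) (extendZero F) atTop U := by
    refine Metric.tendstoUniformlyOn_iff.2 fun ε hε => ?_
    obtain ⟨N, hN⟩ := Metric.tendsto_atTop.1 hF ε hε
    filter_upwards [eventually_ge_atTop N] with n hn z hz
    rw [extendZero_apply _ hz, extendZero_apply _ hz, dist_comm]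
    exact (dist_coe_le_dist _).trans_lt (hN n hn)
  exact (hlim.tendstoLocallyUniformlyOn.differentiableOn
    (Eventually.of_forall fun n => (hu n).differentiableOn) hU).analyticOnNhd hU

noncomputable def ofAnalytic {f : ℂ → E} (hf : AnalyticOnNhd ℂ f U) {C : ℝ}
    (hC : ∀ z ∈ U, ‖f z‖ ≤ C) : U →ᵇ E :=
  ofNormedAddCommGroup (U.domRestrict f) hf.continuousOn.domRestrict C fun z => hC z z.2

lemma extendZero_ofAnalytic {f : ℂ → E} (hf : AnalyticOnNhd ℂ f U) {C : ℝ}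
    (hC : ∀ z ∈ U, ‖f z‖ ≤ C) : EqOn (extendZero (ofAnalytic hf hC)) f U :=
  fun _ hz => extendZero_apply _ hz

lemma ofAnalytic_mem (hU : IsOpen U) {f : ℂ → E} (hf : AnalyticOnNhd ℂ f U) {C : ℝ}
    (hC : ∀ z ∈ U, ‖f z‖ ≤ C) : ofAnalytic hf hC ∈ analyticBCF U E :=
  hf.congr hU (extendZero_ofAnalytic hf hC).symm

structure AnalyticLipschitzOn (U : Set ℂ) (K : ℝ≥0) (T : (ℂ → E) → ℂ → E) : Prop where
  analyticOnNhd : ∀ f, AnalyticOnNhd ℂ f U → AnalyticOnNhd ℂ (T f) U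
  norm_sub_le : ∀ f g, AnalyticOnNhd ℂ f U → AnalyticOnNhd ℂ g U → ∀ S : ℝ,
    (∀ z ∈ U, ‖f z - g z‖ ≤ S) → ∀ z ∈ U, ‖T f z - T g z‖ ≤ K * S

namespace AnalyticLipschitzOn

variable {T : (ℂ → E) → ℂ → E} {K : ℝ≥0}

lemma eqOn (hT : AnalyticLipschitzOn U K T) {f g : ℂ → E} (hf : AnalyticOnNhd ℂ f U)
    (hg : AnalyticOnNhd ℂ g U) (hfg : EqOn f g U) : EqOn (T f) (T g) U := fun z hz => by
  have := hT.norm_sub_le f g hf hg 0 (fun w hw => by simp [hfg hw]) z hz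
  rwa [mul_zero, norm_le_zero_iff, sub_eq_zero] at this

lemma norm_le (hT : AnalyticLipschitzOn U K T) {C₀ : ℝ} (hT₀ : ∀ z ∈ U, ‖T 0 z‖ ≤ C₀)
    {f : ℂ → E} (hf : AnalyticOnNhd ℂ f U) {C : ℝ} (hC : ∀ z ∈ U, ‖f z‖ ≤ C) {z : ℂ}
    (hz : z ∈ U) : ‖T f z‖ ≤ C₀ + K * C :=
  calc ‖T f z‖ ≤ ‖T 0 z‖ + ‖T f z - T 0 z‖ := norm_le_insert' _ _
    _ ≤ C₀ + K * C := add_le_add (hT₀ z hz)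
      (hT.norm_sub_le f 0 hf analyticOnNhd_const C (fun w hw => by simpa using hC w hw) z hz)

noncomputable def liftMap (hT : AnalyticLipschitzOn U K T) (hU : IsOpen U) {C₀ : ℝ}
    (hT₀ : ∀ z ∈ U, ‖T 0 z‖ ≤ C₀) (F : analyticBCF U E) : analyticBCF U E :=
  ⟨ofAnalytic (hT.analyticOnNhd _ F.2) fun _ hz =>
      hT.norm_le hT₀ F.2 (fun _ => norm_extendZero_le F.1) hz,
    ofAnalytic_mem hU _ _⟩

lemma extendZero_liftMap (hT : AnalyticLipschitzOn U K T) (hU : IsOpen U) {C₀ : ℝ}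
    (hT₀ : ∀ z ∈ U, ‖T 0 z‖ ≤ C₀) (F : analyticBCF U E) :
    EqOn (extendZero (hT.liftMap hU hT₀ F).1) (T (extendZero F.1)) U :=
  fun _ hz => extendZero_apply _ hz

lemma contractingWith_liftMap (hT : AnalyticLipschitzOn U K T) (hU : IsOpen U) {C₀ : ℝ}
    (hT₀ : ∀ z ∈ U, ‖T 0 z‖ ≤ C₀) (hK : K < 1) : ContractingWith K (hT.liftMap hU hT₀) := by
  refine ⟨hK, LipschitzWith.of_dist_le_mul fun F G => ?_⟩
  refine (dist_le (by positivity)).2 fun z => ?_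
  rw [dist_eq_norm, ← extendZero_apply _ z.2, ← extendZero_apply _ z.2,
    hT.extendZero_liftMap hU hT₀ F z.2, hT.extendZero_liftMap hU hT₀ G z.2]
  refine hT.norm_sub_le _ _ F.2 G.2 _ (fun w hw => ?_) z z.2
  rw [extendZero_apply _ hw, extendZero_apply _ hw, ← dist_eq_norm]
  exact dist_coe_le_dist _

theorem exists_fixedPoint [CompleteSpace E] (hT : AnalyticLipschitzOn U K T) (hU : IsOpen U)
    (hK : K < 1) {C₀ : ℝ} (hT₀ : ∀ z ∈ U, ‖T 0 z‖ ≤ C₀) :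
    ∃ f, (AnalyticOnNhd ℂ f U ∧ (∃ C : ℝ, ∀ z ∈ U, ‖f z‖ ≤ C) ∧ EqOn (T f) f U) ∧
      ∀ g, AnalyticOnNhd ℂ g U ∧ (∃ C : ℝ, ∀ z ∈ U, ‖g z‖ ≤ C) ∧ EqOn (T g) g U →
        EqOn g f U := by
  have : CompleteSpace (analyticBCF U E) := (isClosed_analyticBCF hU).completeSpace_coe
  have : Nonempty (analyticBCF U E) :=
    ⟨⟨_, ofAnalytic_mem hU analyticOnNhd_const (C := ‖(0 : E)‖) fun _ _ => le_rfl⟩⟩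
  have hΦ := hT.contractingWith_liftMap hU hT₀ hK
  set F := hΦ.fixedPoint
  have hF : EqOn (T (extendZero F.1)) (extendZero F.1) U := fun z hz => by
    rw [← hT.extendZero_liftMap hU hT₀ F hz, hΦ.fixedPoint_isFixedPt]
  refine ⟨extendZero F.1, ⟨F.2, ⟨‖F.1‖, fun _ => norm_extendZero_le F.1⟩, hF⟩, ?_⟩
  rintro g ⟨hg, ⟨C, hC⟩, hTg⟩
  set G : analyticBCF U E := ⟨ofAnalytic hg hC, ofAnalytic_mem hU hg hC⟩
  have hGg : EqOn (extendZero G.1) g U := extendZero_ofAnalytic hg hC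
  have hG : hT.liftMap hU hT₀ G = G := by
    refine Subtype.ext (BoundedContinuousFunction.ext fun z => ?_)
    rw [← extendZero_apply _ z.2, ← extendZero_apply _ z.2, hT.extendZero_liftMap hU hT₀ G z.2,
      hT.eqOn G.2 hg hGg z.2, hTg z.2, hGg z.2]
  intro z hz
  rw [← hGg hz, hΦ.fixedPoint_unique hG]

end AnalyticLipschitzOn

end BoundedAnalytic

lemma openUnitDisc_eq_ball : openUnitDisc = ball (0 : ℂ) 1 := by
  ext z
  simp [openUnitDisc]

lemma isOpen_openUnitDisc : IsOpen openUnitDisc := openUnitDisc_eq_ball ▸ isOpen_ball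

lemma neg_mem_openUnitDisc {z : ℂ} (hz : z ∈ openUnitDisc) : -z ∈ openUnitDisc := by
  simpa [openUnitDisc] using hz

lemma pow_mem_openUnitDisc {z : ℂ} (hz : z ∈ openUnitDisc) {n : ℕ} (hn : n ≠ 0) :
    z ^ n ∈ openUnitDisc := by
  simpa [openUnitDisc, norm_pow] using pow_lt_one₀ (norm_nonneg z) hz hn

lemma exists_sq_eq_of_mem_openUnitDisc {y : ℂ} (hy : y ∈ openUnitDisc) :
    ∃ x ∈ openUnitDisc, x ^ 2 = y := by
  obtain ⟨x, hx⟩ := IsAlgClosed.exists_pow_nat_eq y two_pos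
  refine ⟨x, ?_, hx⟩
  have : ‖x‖ ^ 2 < 1 := by rw [← norm_pow, hx]; exact hy
  simpa [openUnitDisc] using (sq_lt_one_iff₀ (norm_nonneg x)).1 this

noncomputable def taylorCoeff (f : ℂ → ℂ) (n : ℕ) : ℂ := (n ! : ℂ)⁻¹ * iteratedDeriv n f 0

lemma hasCoeffs_taylorCoeff {f : ℂ → ℂ} (hf : AnalyticOnNhd ℂ f openUnitDisc) :
    HasCoeffs f (taylorCoeff f) := fun x hx => by
  rw [openUnitDisc_eq_ball] at hf
  have := Complex.hasSum_taylorSeries_on_ball hf.differentiableOn (z := x) (by simpa using hx)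
  simpa [taylorCoeff, smul_eq_mul, mul_assoc, mul_comm, mul_left_comm] using this

lemma HasCoeffs.hasSum_even {f : ℂ → ℂ} {a : ℕ → ℂ} (h : HasCoeffs f a) {x : ℂ}
    (hx : ‖x‖ < 1) :
    HasSum (fun n => a (2 * n) * (x ^ 2) ^ n) ((f x + f (-x)) / 2) := by
  have hsum := ((h x hx).add (h (-x) (by simpa using hx))).div_const 2
  have hodd : ∀ m ∉ range (2 * ·), (a m * x ^ m + a m * (-x) ^ m) / 2 = 0 := by
    intro m hm
    have : Odd m := Nat.not_even_iff_odd.1 fun ⟨t, ht⟩ => hm ⟨t, by dsimp only; omega⟩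
    simp [this.neg_pow]
  convert (Function.Injective.hasSum_iff (fun _ _ => by omega) hodd).2 hsum using 2 with n
  simp [(even_two_mul n).neg_pow, pow_mul]

lemma analyticOnNhd_tsum_mul_pow {c : ℕ → ℂ} {r : ℝ}
    (h : ∀ y : ℂ, ‖y‖ < r → Summable fun n => c n * y ^ n) :
    AnalyticOnNhd ℂ (fun y => ∑' n, c n * y ^ n) (ball 0 r) := by
  set p := FormalMultilinearSeries.ofScalars ℂ c
  have hp : p.sum = fun y => ∑' n, c n * y ^ n :=
    (FormalMultilinearSeries.ofScalarsSum_eq_tsum c).trans (by simp only [smul_eq_mul])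
  have hr : ∀ y : ℂ, ‖y‖ < r → ‖y‖ₑ < p.radius := by
    intro y hy
    obtain ⟨ρ, hyρ, hρr⟩ := exists_between hy
    have hρ : 0 ≤ ρ := (norm_nonneg y).trans hyρ.le
    have hs := (h ρ (by simpa [abs_of_nonneg hρ] using hρr)).tendsto_atTop_zero.norm
    calc ‖y‖ₑ = ENNReal.ofReal ‖y‖ := (ofReal_norm y).symm
      _ < ENNReal.ofReal ρ := (ENNReal.ofReal_lt_ofReal_iff_of_nonneg (norm_nonneg y)).2 hyρ
      _ ≤ p.radius := p.le_radius_of_tendsto (l := 0) (by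
          simpa [p, FormalMultilinearSeries.ofScalars_norm, abs_of_nonneg hρ, hρ] using hs)
  intro y hy
  have hy' : ‖y‖ < r := by simpa using hy
  rw [← hp]
  exact (p.hasFPowerSeriesOnBall (pos_of_gt (hr y hy'))).analyticAt_of_mem
    (by simpa using hr y hy')

noncomputable def evenPart (f : ℂ → ℂ) (y : ℂ) : ℂ := ∑' n, taylorCoeff f (2 * n) * y ^ n

section

variable {f g : ℂ → ℂ}

lemma evenPart_sq (hf : AnalyticOnNhd ℂ f openUnitDisc) {x : ℂ} (hx : x ∈ openUnitDisc) :
    evenPart f (x ^ 2) = (f x + f (-x)) / 2 :=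
  ((hasCoeffs_taylorCoeff hf).hasSum_even hx).tsum_eq

lemma analyticOnNhd_evenPart (hf : AnalyticOnNhd ℂ f openUnitDisc) :
    AnalyticOnNhd ℂ (evenPart f) openUnitDisc := by
  rw [openUnitDisc_eq_ball]
  refine analyticOnNhd_tsum_mul_pow fun y hy => ?_
  obtain ⟨x, hx, rfl⟩ := exists_sq_eq_of_mem_openUnitDisc hy
  exact ((hasCoeffs_taylorCoeff hf).hasSum_even hx).summable

lemma evenPart_zero : evenPart 0 = 0 := by
  ext y
  simp [evenPart, taylorCoeff]

noncomputable def collatzOp (k : ℕ) (wb wf : ℝ) (f : ℂ → ℂ) (y : ℂ) : ℂ :=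
  wb * evenPart f y + wf / 2 * y * (f (y ^ 3) - f (-y ^ 3)) + y ^ k

variable {k : ℕ} {wb wf : ℝ}

lemma two_mul_collatzOp_sq (hf : AnalyticOnNhd ℂ f openUnitDisc) {x : ℂ}
    (hx : x ∈ openUnitDisc) :
    2 * collatzOp k wb wf f (x ^ 2) =
      wb * (f x + f (-x)) + wf * x ^ 2 * (f (x ^ 6) - f (-x ^ 6)) + 2 * x ^ (2 * k) := by
  rw [collatzOp, evenPart_sq hf hx, ← pow_mul, ← pow_mul]
  ring

lemma isSolution_iff : IsSolution k wb wf f ↔ AnalyticOnNhd ℂ f openUnitDisc ∧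
    (∃ C : ℝ, ∀ z ∈ openUnitDisc, ‖f z‖ ≤ C) ∧ EqOn (collatzOp k wb wf f) f openUnitDisc := by
  refine and_congr_right fun hf => and_congr_right fun _ => ⟨fun h y hy => ?_, fun h x hx => ?_⟩
  · obtain ⟨x, hx, rfl⟩ := exists_sq_eq_of_mem_openUnitDisc hy
    linear_combination (two_mul_collatzOp_sq (k := k) (wb := wb) (wf := wf) hf hx - h x hx) / 2
  · rw [← h (pow_mem_openUnitDisc hx two_ne_zero), two_mul_collatzOp_sq hf hx]

lemma analyticOnNhd_collatzOp (hf : AnalyticOnNhd ℂ f openUnitDisc) :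
    AnalyticOnNhd ℂ (collatzOp k wb wf f) openUnitDisc := by
  intro y hy
  have hy3 := pow_mem_openUnitDisc hy three_ne_zero
  have h₁ : AnalyticAt ℂ (fun y => f (y ^ 3)) y :=
    (hf _ hy3).comp (f := fun y => y ^ 3) (by fun_prop)
  have h₂ : AnalyticAt ℂ (fun y => f (-y ^ 3)) y :=
    (hf _ (neg_mem_openUnitDisc hy3)).comp (f := fun y => -y ^ 3) (by fun_prop)
  exact ((analyticAt_const.mul (analyticOnNhd_evenPart hf y hy)).add
    ((analyticAt_const.mul analyticAt_id).mul (h₁.sub h₂))).add (analyticAt_id.pow k)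

lemma norm_collatzOp_sub_le (hf : AnalyticOnNhd ℂ f openUnitDisc)
    (hg : AnalyticOnNhd ℂ g openUnitDisc) {S : ℝ}
    (hS : ∀ z ∈ openUnitDisc, ‖f z - g z‖ ≤ S) {y : ℂ} (hy : y ∈ openUnitDisc) :
    ‖collatzOp k wb wf f y - collatzOp k wb wf g y‖ ≤ (|wb| + |wf|) * S := by
  obtain ⟨x, hx, rfl⟩ := exists_sq_eq_of_mem_openUnitDisc hy
  have hx6 := pow_mem_openUnitDisc (pow_mem_openUnitDisc hx two_ne_zero) three_ne_zero
  have half_le : ∀ {a b : ℂ}, ‖a‖ ≤ S → ‖b‖ ≤ S → ‖(a + b) / 2‖ ≤ S := fun ha hb => by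
    rw [norm_div, Complex.norm_two]
    linarith [norm_add_le _ _ |>.trans (add_le_add ha hb)]
  have hodd : ‖((f ((x ^ 2) ^ 3) - g ((x ^ 2) ^ 3)) +
      -(f (-(x ^ 2) ^ 3) - g (-(x ^ 2) ^ 3))) / 2‖ ≤ S :=
    half_le (hS _ hx6) (by rw [norm_neg]; exact hS _ (neg_mem_openUnitDisc hx6))
  calc ‖collatzOp k wb wf f (x ^ 2) - collatzOp k wb wf g (x ^ 2)‖
      = ‖wb * (((f x - g x) + (f (-x) - g (-x))) / 2) + wf * x ^ 2 *
          (((f ((x ^ 2) ^ 3) - g ((x ^ 2) ^ 3)) +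
            -(f (-(x ^ 2) ^ 3) - g (-(x ^ 2) ^ 3))) / 2)‖ := by
        rw [collatzOp, collatzOp, evenPart_sq hf hx, evenPart_sq hg hx]
        ring_nf
    _ ≤ |wb| * S + |wf| * 1 * S := by
        refine (norm_add_le _ _).trans (add_le_add ?_ ?_)
        · rw [norm_mul, Complex.norm_real, Real.norm_eq_abs]
          exact mul_le_mul_of_nonneg_left
            (half_le (hS x hx) (hS _ (neg_mem_openUnitDisc hx))) (abs_nonneg _)
        · rw [norm_mul, norm_mul, Complex.norm_real, Real.norm_eq_abs]
          exact mul_le_mul (mul_le_mul_of_nonneg_left (pow_mem_openUnitDisc hx two_ne_zero).le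
            (abs_nonneg _)) hodd (norm_nonneg _) (by positivity)
    _ = (|wb| + |wf|) * S := by ring

lemma norm_collatzOp_zero_le {y : ℂ} (hy : y ∈ openUnitDisc) :
    ‖collatzOp k wb wf 0 y‖ ≤ 1 := by
  simpa [collatzOp, evenPart_zero] using pow_le_one₀ (norm_nonneg y) hy.le

lemma analyticLipschitzOn_collatzOp (k : ℕ) (wb wf : ℝ) :
    BoundedAnalytic.AnalyticLipschitzOn openUnitDisc ⟨|wb| + |wf|, by positivity⟩
      (collatzOp k wb wf) :=
  ⟨fun _ => analyticOnNhd_collatzOp, fun _ _ hf hg _ hS _ => norm_collatzOp_sub_le hf hg hS⟩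

end

theorem stmt_6_general (k : ℕ) (wb wf : ℝ) (hw : |wb| + |wf| < 1) :
    ∃ f : ℂ → ℂ, IsSolution k wb wf f ∧
      ∀ g : ℂ → ℂ, IsSolution k wb wf g → Set.EqOn g f openUnitDisc := by
  obtain ⟨f, hf, huniq⟩ := (analyticLipschitzOn_collatzOp k wb wf).exists_fixedPoint
    isOpen_openUnitDisc hw fun _ => norm_collatzOp_zero_le
  exact ⟨f, isSolution_iff.2 hf, fun g hg => huniq g (isSolution_iff.1 hg)⟩

theorem stmt_6 (k : ℕ) (wb wf : ℝ) (hk : 0 < k) (hw : |wb| + |wf| < 1) :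
    ∃ f : ℂ → ℂ, IsSolution k wb wf f ∧
      ∀ g : ℂ → ℂ, IsSolution k wb wf g → Set.EqOn g f openUnitDisc :=
  stmt_6_general k wb wf hw
end

section
/- Assume 0 ≤ w_b, 0 ≤ w_f and w_b + w_f < 1, and let f be a solution of the Collatz functional equation for (k, w_b, w_f) with coefficients (aₙ). Then aₙ ≥ 0 (as a real number) for every n, and moreover a_k ≥ 1. -/
/-!
Substituting `y = x²`, the functional equation reads `f y = y^k + wb · f_even x + wf · y · f_odd (y³)`.
Comparing coefficients gives the recursion
`a m = [m = k] + wb · a (2m) + [m ≡ 4 mod 6] · wf · a (2 ⌊m/6⌋ + 1)`, and by Cauchy's estimate the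
coefficients are bounded. Hence `|Im aₘ|` and the negative part of `Re aₘ` are bounded nonnegative
sequences `u` with `u m ≤ wb · u (2m) + wf · u (2 ⌊m/6⌋ + 1)`; their supremum `S` satisfies
`S ≤ (wb + wf) S`, so `S = 0`. Finally `a k = 1 + (nonnegative terms)`.
-/

open Filter Topology Metric

section Reindex

variable {R : Type*} [Ring R] [TopologicalSpace R]

theorem hasSum_ite_mod_mul_pow_iff {d : ℕ → R} {x s : R} {m r : ℕ} (hr : r < m) :
    HasSum (fun n => (if n % m = r then d (n / m) else 0) * x ^ n) s ↔
      HasSum (fun j => d j * x ^ (m * j + r)) s := by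
  have hm : 0 < m := by omega
  have hinj : Function.Injective (fun j => m * j + r) := fun i j hij => by
    simpa [hm.ne'] using hij
  rw [← hinj.hasSum_iff]
  · congr! 2 with j
    have hmod : (m * j + r) % m = r := by rw [mul_comm]; exact Nat.mul_add_mod_of_lt hr
    have hdiv : (m * j + r) / m = j := by rw [Nat.mul_add_div hm, Nat.div_eq_of_lt hr, add_zero]
    simp only [Function.comp_apply, hmod, hdiv, if_true]
  · rintro n hn
    have : n % m ≠ r := fun h => hn ⟨n / m, by rw [← h]; exact Nat.div_add_mod n m⟩
    simp [this]

variable [IsTopologicalRing R] {c : ℕ → R} {x s t : R}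

theorem HasSum.even_part (hs : HasSum (fun n => c n * x ^ n) s)
    (ht : HasSum (fun n => c n * (-x) ^ n) t) :
    HasSum (fun j => 2 * c (2 * j) * (x ^ 2) ^ j) (s + t) := by
  have h : HasSum (fun n => (if n % 2 = 0 then 2 * c (2 * (n / 2)) else 0) * x ^ n) (s + t) := by
    convert hs.add ht using 1
    funext n
    rcases Nat.even_or_odd n with hn | hn
    · simp [Nat.even_iff.mp hn, Nat.mul_div_cancel' hn.two_dvd, hn.neg_pow, two_mul, add_mul]
    · simp [Nat.odd_iff.mp hn, hn.neg_pow]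
  simpa only [add_zero, pow_mul] using
    (hasSum_ite_mod_mul_pow_iff (d := fun j => 2 * c (2 * j)) two_pos).mp h

theorem HasSum.odd_part (hs : HasSum (fun n => c n * x ^ n) s)
    (ht : HasSum (fun n => c n * (-x) ^ n) t) :
    HasSum (fun j => 2 * c (2 * j + 1) * x ^ (2 * j + 1)) (s - t) := by
  refine (hasSum_ite_mod_mul_pow_iff (d := fun j => 2 * c (2 * j + 1)) one_lt_two).mp ?_
  convert hs.sub ht using 1
  · rfl
  funext n
  rcases Nat.even_or_odd n with hn | hn
  · simp [Nat.even_iff.mp hn, hn.neg_pow]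
  · rw [if_pos (Nat.odd_iff.mp hn), Nat.two_mul_div_two_add_one_of_odd hn]
    simp [hn.neg_pow, two_mul, add_mul]

end Reindex

theorem eq_zero_of_le_mul_add_mul {ι : Type*} {u : ι → ℝ} {g h : ι → ι} {p q : ℝ}
    (hu0 : ∀ i, 0 ≤ u i) (hbdd : BddAbove (Set.range u)) (hp : 0 ≤ p) (hq : 0 ≤ q)
    (hpq : p + q < 1) (hu : ∀ i, u i ≤ p * u (g i) + q * u (h i)) (i : ι) : u i = 0 := by
  have : Nonempty ι := ⟨i⟩
  have hle (j : ι) : u j ≤ ⨆ j, u j := le_ciSup hbdd j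
  have hsup : ⨆ j, u j ≤ (p + q) * ⨆ j, u j := ciSup_le fun j =>
    (hu j).trans (by nlinarith [hle (g j), hle (h j)])
  nlinarith [hu0 i, hle i]

namespace HasCoeffs

variable {c d : ℕ → ℂ} {g : ℂ → ℂ}

theorem hasFPowerSeriesOnBall (h : HasCoeffs g c) :
    HasFPowerSeriesOnBall g (FormalMultilinearSeries.ofScalars ℂ c) 0 1 := by
  have hcoeff (n : ℕ) : (FormalMultilinearSeries.ofScalars ℂ c).coeff n = c n := by simp
  refine ⟨ENNReal.le_of_forall_nnreal_lt fun r hr => ?_, one_pos, fun {y} hy => ?_⟩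
  · have hr1 : ‖(r : ℂ)‖ < 1 := by simpa using (by exact_mod_cast hr : (r : ℝ) < 1)
    refine (FormalMultilinearSeries.ofScalars ℂ c).le_radius_of_tendsto (l := 0) ?_
    simpa [hcoeff, norm_mul, norm_pow] using ((h _ hr1).summable.tendsto_atTop_zero).norm
  · have hy1 : ‖y‖ < 1 := by simpa [← ofReal_norm] using hy
    simpa [FormalMultilinearSeries.ofScalars_apply_eq, mul_comm] using h y hy1

theorem unique (hc : HasCoeffs g c) (hd : HasCoeffs g d) : c = d :=
  FormalMultilinearSeries.ofScalars_series_injective ℂ ℂ <|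
    hc.hasFPowerSeriesOnBall.hasFPowerSeriesAt.eq_formalMultilinearSeries
      hd.hasFPowerSeriesOnBall.hasFPowerSeriesAt

theorem eq_iteratedDeriv_div_factorial (hc : HasCoeffs g c) (n : ℕ) :
    c n = iteratedDeriv n g 0 / n.factorial := by
  have hg := hc.hasFPowerSeriesOnBall
  exact congrFun (FormalMultilinearSeries.ofScalars_series_injective ℂ ℂ <|
    hg.hasFPowerSeriesAt.eq_formalMultilinearSeries hg.analyticAt.hasFPowerSeriesAt) n

theorem norm_le_of_norm_le (hc : HasCoeffs g c) {C : ℝ} (hC : ∀ x : ℂ, ‖x‖ < 1 → ‖g x‖ ≤ C)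
    (n : ℕ) : ‖c n‖ ≤ C := by
  have hdiff : DifferentiableOn ℂ g (ball 0 1) := by
    simpa [← eball_ofReal] using hc.hasFPowerSeriesOnBall.differentiableOn
  have hcauchy : ∀ r ∈ Set.Ioo (0 : ℝ) 1, ‖c n‖ ≤ C / r ^ n := by
    rintro r ⟨hr0, hr1⟩
    have hcl : DiffContOnCl ℂ g (ball 0 r) := by
      refine (hdiff.mono ?_).diffContOnCl
      rw [closure_ball 0 hr0.ne']
      exact closedBall_subset_ball hr1
    have hsphere : ∀ z ∈ sphere (0 : ℂ) r, ‖g z‖ ≤ C := fun z hz =>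
      hC z (by rw [mem_sphere_zero_iff_norm] at hz; linarith)
    have := Complex.norm_iteratedDeriv_le_of_forall_mem_sphere_norm_le n hr0 hcl hsphere
    rw [hc.eq_iteratedDeriv_div_factorial, norm_div, Complex.norm_natCast,
      div_le_iff₀ (by positivity), div_mul_eq_mul_div, mul_comm C]
    exact this
  have hlim : Tendsto (fun r : ℝ => C / r ^ n) (𝓝[<] 1) (𝓝 C) := by
    have : Tendsto (fun r : ℝ => C / r ^ n) (𝓝 1) (𝓝 (C / 1 ^ n)) :=
      tendsto_const_nhds.div ((continuous_pow n).tendsto 1) (by simp)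
    rw [one_pow, div_one] at this
    exact this.mono_left nhdsWithin_le_nhds
  exact ge_of_tendsto hlim (eventually_of_mem (Ioo_mem_nhdsLT one_pos) hcauchy)

end HasCoeffs

namespace IsSolution

variable {k : ℕ} {wb wf : ℝ} {f : ℂ → ℂ} {a : ℕ → ℂ}

theorem coeff_eq (hf : IsSolution k wb wf f) (ha : HasCoeffs f a) (m : ℕ) :
    a m = (if m = k then 1 else 0) + wb * a (2 * m) +
      if m % 6 = 4 then wf * a (2 * (m / 6) + 1) else 0 := by
  suffices HasCoeffs f fun m => (if m = k then 1 else 0) + wb * a (2 * m) +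
      if m % 6 = 4 then wf * a (2 * (m / 6) + 1) else 0 from congrFun (ha.unique this) m
  intro y hy
  obtain ⟨x, rfl⟩ := IsAlgClosed.exists_pow_nat_eq y two_pos
  have hx : ‖x‖ < 1 := by
    rwa [norm_pow, pow_lt_one_iff_of_nonneg (norm_nonneg x) two_ne_zero] at hy
  have hx6 : ‖x ^ 6‖ < 1 := by
    rw [norm_pow]; exact pow_lt_one₀ (norm_nonneg x) hx (by norm_num)
  have heven := (ha x hx).even_part (ha (-x) (by rwa [norm_neg]))
  have hodd_x6 := (ha (x ^ 6) hx6).odd_part (ha (-x ^ 6) (by rwa [norm_neg]))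
  have hodd : HasSum (fun n => (if n % 6 = 4 then 2 * a (2 * (n / 6) + 1) else 0) * (x ^ 2) ^ n)
      (x ^ 2 * (f (x ^ 6) - f (-x ^ 6))) :=
    (hasSum_ite_mod_mul_pow_iff (d := fun j => 2 * a (2 * j + 1)) (by norm_num)).mpr
      ((hodd_x6.mul_left (x ^ 2)).congr_fun fun j => by ring)
  have htotal := ((heven.mul_left (wb : ℂ)).add (hodd.mul_left (wf : ℂ))).add
    (hasSum_ite_eq k (2 * (x ^ 2) ^ k))
  have hval : 2 * f (x ^ 2) = wb * (f x + f (-x)) + wf * (x ^ 2 * (f (x ^ 6) - f (-x ^ 6))) +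
      2 * (x ^ 2) ^ k := by
    rw [hf.2.2 x hx]; ring
  rw [← hasSum_mul_left_iff (two_ne_zero' ℂ), hval]
  refine htotal.congr_fun fun n => ?_
  dsimp only
  split_ifs <;> subst_vars <;> ring

theorem bddAbove_norm_coeff (hf : IsSolution k wb wf f) (ha : HasCoeffs f a) :
    BddAbove (Set.range fun n => ‖a n‖) := by
  obtain ⟨C, hC⟩ := hf.2.1
  exact ⟨C, by rintro _ ⟨n, rfl⟩; exact ha.norm_le_of_norm_le hC n⟩

theorem coeff_im_eq (hf : IsSolution k wb wf f) (ha : HasCoeffs f a) (m : ℕ) :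
    (a m).im = wb * (a (2 * m)).im +
      if m % 6 = 4 then wf * (a (2 * (m / 6) + 1)).im else 0 := by
  rw [hf.coeff_eq ha m]
  split_ifs <;> simp

theorem coeff_re_eq (hf : IsSolution k wb wf f) (ha : HasCoeffs f a) (m : ℕ) :
    (a m).re = (if m = k then 1 else 0) + wb * (a (2 * m)).re +
      if m % 6 = 4 then wf * (a (2 * (m / 6) + 1)).re else 0 := by
  rw [hf.coeff_eq ha m]
  split_ifs <;> simp

theorem coeff_im_eq_zero (hf : IsSolution k wb wf f) (ha : HasCoeffs f a) (hwb : 0 ≤ wb)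
    (hwf : 0 ≤ wf) (hw : wb + wf < 1) (n : ℕ) :
    (a n).im = 0 := by
  refine abs_eq_zero.mp <| eq_zero_of_le_mul_add_mul (u := fun n => |(a n).im|)
    (g := (2 * ·)) (h := fun m => 2 * (m / 6) + 1) (fun n => abs_nonneg _)
    ((hf.bddAbove_norm_coeff ha).range_mono _ fun n => Complex.abs_im_le_norm _) hwb hwf hw
    (fun m => ?_) n
  rw [hf.coeff_im_eq ha m]
  refine (abs_add_le _ _).trans ?_
  split_ifs <;> simp [abs_mul, abs_of_nonneg hwb, abs_of_nonneg hwf, mul_nonneg hwf]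

theorem coeff_re_nonneg (hf : IsSolution k wb wf f) (ha : HasCoeffs f a) (hwb : 0 ≤ wb)
    (hwf : 0 ≤ wf) (hw : wb + wf < 1) (n : ℕ) :
    0 ≤ (a n).re := by
  refine negPart_eq_zero.mp <| eq_zero_of_le_mul_add_mul (u := fun n => (a n).re⁻)
    (g := (2 * ·)) (h := fun m => 2 * (m / 6) + 1) (fun n => negPart_nonneg _)
    ((hf.bddAbove_norm_coeff ha).range_mono _ fun n => ?_) hwb hwf hw (fun m => ?_) n
  · exact (max_le (neg_le_abs _) (abs_nonneg _)).trans (Complex.abs_re_le_norm _)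
  · have h2m := mul_le_mul_of_nonneg_left (neg_le_negPart (a (2 * m)).re) hwb
    have h6m := mul_le_mul_of_nonneg_left (neg_le_negPart (a (2 * (m / 6) + 1)).re) hwf
    refine max_le ?_ (by positivity)
    rw [hf.coeff_re_eq ha m]
    split_ifs <;> nlinarith [mul_nonneg hwf (negPart_nonneg (a (2 * (m / 6) + 1)).re)]

end IsSolution

theorem stmt_9_general (k : ℕ) (wb wf : ℝ) (f : ℂ → ℂ) (a : ℕ → ℂ)
    (hwb : 0 ≤ wb) (hwf : 0 ≤ wf) (hw : wb + wf < 1)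
    (hf : IsSolution k wb wf f) (ha : HasCoeffs f a) :
    (∀ n : ℕ, (a n).im = 0 ∧ 0 ≤ (a n).re) ∧ 1 ≤ (a k).re := by
  have hre := hf.coeff_re_nonneg ha hwb hwf hw
  refine ⟨fun n => ⟨hf.coeff_im_eq_zero ha hwb hwf hw n, hre n⟩, ?_⟩
  rw [hf.coeff_re_eq ha k, if_pos rfl]
  have h2k := mul_nonneg hwb (hre (2 * k))
  have h6k := mul_nonneg hwf (hre (2 * (k / 6) + 1))
  split_ifs <;> linarith

theorem stmt_9 (k : ℕ) (wb wf : ℝ) (f : ℂ → ℂ) (a : ℕ → ℂ) (hk : 0 < k)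
    (hwb : 0 ≤ wb) (hwf : 0 ≤ wf) (hw : wb + wf < 1)
    (hf : IsSolution k wb wf f) (ha : HasCoeffs f a) :
    (∀ n : ℕ, (a n).im = 0 ∧ 0 ≤ (a n).re) ∧ 1 ≤ (a k).re :=
  stmt_9_general k wb wf f a hwb hwf hw hf ha
end
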